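/- With ĝ₁ defined via the instanton as above, ĝ₁ satisfies the Hamilton–Jacobi–Bellman equation exactly along the instanton: (∂_t ĝ₁ + H^ε ĝ₁)(t, φ_t) = 0 for all t ∈ [0,T), and ĝ₁(T, φ_T) = f(φ_T). -/

import Mathlib

open Real Matrix Set
noncomputable section

def pderiv' {d : ℕ} (φ : (Fin d → ℝ) → ℝ) (x : Fin d → ℝ) (i : Fin d) : ℝ :=
  fderiv ℝ φ x (Pi.single i 1)

def hess' {d : ℕ} (φ : (Fin d → ℝ) → ℝ) (x : Fin d → ℝ) (i j : Fin d) : ℝ :=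
  fderiv ℝ (fun y => pderiv' φ y j) x (Pi.single i 1)

/-- The HJB operator `H^ε g = b·∇g + (ε/2) D:∇²g + (1/2)|σᵀ∇g|²`, `D = σσᵀ`. -/
def Hop {d m : ℕ} (b : (Fin d → ℝ) → Fin d → ℝ) (σ : Matrix (Fin d) (Fin m) ℝ)
    (ε : ℝ) (g : (Fin d → ℝ) → ℝ) (x : Fin d → ℝ) : ℝ :=
  (∑ i, b x i * pderiv' g x i) + (ε / 2) * ∑ i, ∑ j, (σ * σᵀ) i j * hess' g x i j
    + (1 / 2) * ∑ k, (∑ i, σ i k * pderiv' g x i) ^ 2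

/-- The instanton ansatz `ĝ₁(t,x) = f(φ_T) − ½∫_t^T θ_s·Dθ_s ds + θ_t·(x−φ_t)`. -/
def ghat1 {d m : ℕ} (f : (Fin d → ℝ) → ℝ) (σ : Matrix (Fin d) (Fin m) ℝ)
    (φ θ : ℝ → Fin d → ℝ) (T : ℝ) (t : ℝ) (x : Fin d → ℝ) : ℝ :=
  f (φ T) - (1 / 2) * (∫ s in t..T, (θ s) ⬝ᵥ (σ * σᵀ).mulVec (θ s))
    + (θ t) ⬝ᵥ (x - φ t)

lemma hasFDerivAt_affine {d : ℕ} (C : ℝ) (c a x : Fin d → ℝ) :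
    HasFDerivAt (fun y : Fin d → ℝ => C + c ⬝ᵥ (y - a))
      (∑ j, c j • (ContinuousLinearMap.proj j : (Fin d → ℝ) →L[ℝ] ℝ)) x := by
  have h : (fun y : Fin d → ℝ => C + c ⬝ᵥ (y - a))
      = fun y => (∑ j, c j • (ContinuousLinearMap.proj j : (Fin d → ℝ) →L[ℝ] ℝ)) y
          + (C - c ⬝ᵥ a) := by
    funext y
    simp [dotProduct, ContinuousLinearMap.sum_apply, mul_sub, Finset.sum_sub_distrib]
    ring
  rw [h]
  exact ((∑ j, c j • (ContinuousLinearMap.proj j : (Fin d → ℝ) →L[ℝ] ℝ)).hasFDerivAt).add_const _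

lemma pderiv'_affine {d : ℕ} (C : ℝ) (c a x : Fin d → ℝ) (i : Fin d) :
    pderiv' (fun y => C + c ⬝ᵥ (y - a)) x i = c i := by
  rw [pderiv', (hasFDerivAt_affine C c a x).fderiv]
  simp [Pi.single_apply]

lemma hess'_affine {d : ℕ} (C : ℝ) (c a x : Fin d → ℝ) (i j : Fin d) :
    hess' (fun y => C + c ⬝ᵥ (y - a)) x i j = 0 := by
  rw [hess']
  have : (fun y : Fin d → ℝ => pderiv' (fun y => C + c ⬝ᵥ (y - a)) y j) = fun _ => c j := by
    funext y; exact pderiv'_affine C c a y j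
  rw [this, fderiv_fun_const]
  simp

lemma quad_eq {d m : ℕ} (σ : Matrix (Fin d) (Fin m) ℝ) (v : Fin d → ℝ) :
    v ⬝ᵥ (σ * σᵀ).mulVec v = ∑ k, (∑ i, σ i k * v i) ^ 2 := by
  simp only [dotProduct, Matrix.mulVec, Matrix.mul_apply, Matrix.transpose_apply,
    Finset.sum_mul, Finset.mul_sum, sq]
  have h1 : (∑ a, ∑ c, ∑ i, v a * (σ a i * σ c i * v c))
      = ∑ a, ∑ i, ∑ c, v a * (σ a i * σ c i * v c) :=
    Finset.sum_congr rfl fun a _ => Finset.sum_comm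
  have h2 : (∑ a, ∑ i, ∑ c, v a * (σ a i * σ c i * v c))
      = ∑ i, ∑ a, ∑ c, v a * (σ a i * σ c i * v c) := Finset.sum_comm
  rw [h1, h2]
  exact Finset.sum_congr rfl fun k _ => Finset.sum_congr rfl fun a _ =>
    Finset.sum_congr rfl fun c _ => by ring

/-- `ĝ₁` solves the HJB problem exactly along the instanton path:
`(∂_t ĝ₁ + H^ε ĝ₁)(t, φ_t) = 0` on `[0,T)` and `ĝ₁(T, φ_T) = f(φ_T)`. -/
theorem instanton_solves_HJB_along_instanton {d m : ℕ}
    (b : (Fin d → ℝ) → Fin d → ℝ) (hb : ContDiff ℝ (⊤ : ℕ∞) b)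
    (σ : Matrix (Fin d) (Fin m) ℝ)
    (f : (Fin d → ℝ) → ℝ) (hf : ContDiff ℝ (⊤ : ℕ∞) f)
    (T : ℝ) (hT : 0 < T) (x0 : Fin d → ℝ)
    (b' : (Fin d → ℝ) → Matrix (Fin d) (Fin d) ℝ)
    (hb' : ∀ x, HasFDerivAt b (LinearMap.toContinuousLinearMap (b' x).mulVecLin) x)
    (φ θ : ℝ → Fin d → ℝ)
    (hφ0 : φ 0 = x0)
    (hφ : ∀ t, HasDerivAt φ (b (φ t) + (σ * σᵀ).mulVec (θ t)) t)
    (hθ : ∀ t, HasDerivAt θ (-(b' (φ t))ᵀ.mulVec (θ t)) t)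
    (hθT : θ T = fun i => pderiv' f (φ T) i) :
    (∀ ε : ℝ, ∀ t ∈ Ico (0:ℝ) T,
      deriv (fun s => ghat1 f σ φ θ T s (φ t)) t
        + Hop b σ ε (fun y => ghat1 f σ φ θ T t y) (φ t) = 0)
    ∧ ghat1 f σ φ θ T T (φ T) = f (φ T) := by
  set h : ℝ → ℝ := fun s => (θ s) ⬝ᵥ (σ * σᵀ).mulVec (θ s) with hh
  constructor
  · intro ε t ht
    -- continuity of θ and h
    have hθc : Continuous θ := by
      rw [continuous_iff_continuousAt]; exact fun s => (hθ s).continuousAt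
    have hhc : Continuous h := by
      simp only [hh, dotProduct, Matrix.mulVec]
      exact continuous_finset_sum _ fun i _ => ((continuous_apply i).comp hθc).mul
        (continuous_finset_sum _ fun j _ => continuous_const.mul ((continuous_apply j).comp hθc))
    -- derivative of the integral term
    have hint : HasDerivAt (fun u => ∫ s in u..T, h s) (-(h t)) t := by
      have h1 : HasDerivAt (fun u => ∫ s in T..u, h s) (h t) t :=
        intervalIntegral.integral_hasDerivAt_right (hhc.intervalIntegrable _ _)
          (hhc.stronglyMeasurableAtFilter _ _) hhc.continuousAt
      have h2 : (fun u => ∫ s in u..T, h s) = fun u => -∫ s in T..u, h s :=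
        funext fun u => intervalIntegral.integral_symm _ _
      rw [h2]; exact h1.neg
    -- derivative of the dot-product term
    have hdot : HasDerivAt (fun s => (θ s) ⬝ᵥ (φ t - φ s))
        (∑ i, ((-(b' (φ t))ᵀ.mulVec (θ t)) i * (φ t i - φ t i)
          + θ t i * (0 - (b (φ t) + (σ * σᵀ).mulVec (θ t)) i))) t := by
      have hrw : (fun s => (θ s) ⬝ᵥ (φ t - φ s)) = fun s => ∑ i, θ s i * (φ t i - φ s i) := by
        funext s; simp [dotProduct]
      rw [hrw]
      apply HasDerivAt.fun_sum
      intro i _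
      exact ((hasDerivAt_pi.mp (hθ t)) i).mul
        ((hasDerivAt_const t (φ t i)).sub ((hasDerivAt_pi.mp (hφ t)) i))
    have hg : HasDerivAt (fun s => ghat1 f σ φ θ T s (φ t))
        ((0 - (1/2) * (-(h t))) + ∑ i, ((-(b' (φ t))ᵀ.mulVec (θ t)) i * (φ t i - φ t i)
          + θ t i * (0 - (b (φ t) + (σ * σᵀ).mulVec (θ t)) i))) t := by
      have hrw : (fun s => ghat1 f σ φ θ T s (φ t))
          = fun s => (f (φ T) - (1/2) * ∫ s' in s..T, h s') + (θ s) ⬝ᵥ (φ t - φ s) := rfl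
      rw [hrw]
      exact ((hasDerivAt_const t (f (φ T))).sub (hint.const_mul (1/2))).add hdot
    rw [hg.deriv]
    -- spatial derivatives
    have hsp : (fun y => ghat1 f σ φ θ T t y)
        = fun y => (f (φ T) - (1/2) * ∫ s in t..T, h s) + (θ t) ⬝ᵥ (y - φ t) := rfl
    rw [Hop, hsp]
    simp only [pderiv'_affine, hess'_affine, mul_zero, Finset.sum_const_zero, add_zero]
    rw [← quad_eq]
    have e1 : ∑ i, ((-(b' (φ t))ᵀ.mulVec (θ t)) i * (φ t i - φ t i)
          + θ t i * (0 - (b (φ t) + (σ * σᵀ).mulVec (θ t)) i))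
        = -((∑ i, b (φ t) i * θ t i) + h t) := by
      simp only [sub_self, mul_zero, zero_add, zero_sub, mul_neg, Pi.add_apply,
        Finset.sum_neg_distrib, hh, dotProduct, mul_add, Finset.sum_add_distrib]
      ring_nf
      rw [Finset.sum_congr rfl fun i _ => mul_comm (θ t i) (b (φ t) i)]
      ring
    rw [e1]
    ring
  · simp [ghat1]
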